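/- arXiv:2206.00514 — 2 statements merged into one kernel-verified Lean document; each statement's English description precedes it below -/
import Mathlib

section
/- For any n×n real matrix A of full rank and any 1 ≤ i ≤ n−1, the quantities t_{i,k}(A) satisfy t_{i,1}(A) + t_{i,2}(A) + ⋯ + t_{i,n}(A) = n − i. -/
open MeasureTheory ProbabilityTheory Matrix Filter Topology

noncomputable section

/-- The standard Gaussian measure on `ℝ^d` (modeled on `Fin d → ℝ`). -/
def gaussianPi (d : ℕ) : Measure (Fin d → ℝ) :=
  Measure.pi fun _ => gaussianReal 0 1

/-- The Euclidean norm on `Fin n → ℝ`. -/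
def euclidNorm {n : ℕ} (x : Fin n → ℝ) : ℝ :=
  Real.sqrt (∑ j, x j ^ 2)

/-- The uniform distribution on the unit sphere `S^{n-1} ⊆ ℝ^n`, realized as the law of a
normalized standard Gaussian vector. -/
def uniformSphere (n : ℕ) : Measure (Fin n → ℝ) :=
  (gaussianPi n).map fun x => (euclidNorm x)⁻¹ • x

/-- `lam` is the (decreasingly) ordered enumeration of the eigenvalues of the symmetric
matrix `M`. -/
def IsOrderedEigenvalues {n : ℕ} (M : Matrix (Fin n) (Fin n) ℝ) (lam : Fin n → ℝ) : Prop :=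
  Antitone lam ∧ ∃ (hM : M.IsHermitian) (σ : Equiv.Perm (Fin n)), lam = hM.eigenvalues ∘ σ

/-- The quantity `t_{i,k}(A)`, expressed in terms of the eigenvalues `lam` of `AAᵀ`:
`t_{i,k} = E[1/(1 + λ_k w_{ik}ᵀ (∑_{ℓ≠k} λ_ℓ w_{iℓ} w_{iℓ}ᵀ)⁻¹ w_{ik})]`, where
`w_{i1},…,w_{in}` are i.i.d. standard Gaussian vectors in `ℝ^i`. -/
def tval (i : ℕ) {n : ℕ} (lam : Fin n → ℝ) (k : Fin n) : ℝ :=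
  ∫ w : Fin n → Fin i → ℝ,
    (1 + lam k *
        (w k ⬝ᵥ ((∑ l ∈ Finset.univ.erase k,
            lam l • Matrix.vecMulVec (w l) (w l))⁻¹).mulVec (w k)))⁻¹
    ∂(Measure.pi fun _ : Fin n => gaussianPi i)

/-- The variance `σ_n²` from Theorem 2.1:
`σ_n² = −2p/n + 2 ∑_{i=1}^{p−1} (∑_k λ_k² t_{i,k})/(∑_k λ_k t_{i,k})²`. -/
def sigmaSq (n p : ℕ) (lam : Fin n → ℝ) : ℝ :=
  -2 * (p : ℝ) / (n : ℝ) + 2 * ∑ i ∈ Finset.Ico 1 p,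
    (∑ k, lam k ^ 2 * tval i lam k) / (∑ k, lam k * tval i lam k) ^ 2

/-- The centering `μ_n` from Theorem 2.1:
`μ_n = log tr(AAᵀ) − p log n − σ_n²/2 + ∑_{i=1}^{p−1} log(∑_k λ_k t_{i,k})`. -/
def muSeq (n p : ℕ) (A : Matrix (Fin n) (Fin n) ℝ) (lam : Fin n → ℝ) : ℝ :=
  Real.log (Matrix.trace (A * Aᵀ)) - (p : ℝ) * Real.log (n : ℝ) - sigmaSq n p lam / 2
    + ∑ i ∈ Finset.Ico 1 p, Real.log (∑ k, lam k * tval i lam k)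

end

/-! For almost every sample, the matrix `B = ∑ₗ λₗ wₗ wₗᵀ` and every leave-one-out matrix
`Bₖ = B - λₖ wₖ wₖᵀ` are positive definite: any `n - 1 ≥ i` independent Gaussian vectors span
`ℝ^i` almost surely, because a proper subspace is Lebesgue-null. By the Sherman–Morrison
formula the `k`-th integrand is then `1 - λₖ wₖᵀ B⁻¹ wₖ`, and these sum to
`n - tr (B⁻¹ B) = n - i` pointwise, hence in expectation. -/

namespace Matrix

section CommSemiring

variable {R : Type*} [CommSemiring R] {n ι : Type*} [Fintype n]

theorem dotProduct_mulVec_eq_trace_mul_vecMulVec (A : Matrix n n R) (v : n → R) :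
    v ⬝ᵥ A *ᵥ v = trace (A * vecMulVec v v) := by
  rw [mul_vecMulVec, trace_vecMulVec, dotProduct_comm]

theorem dotProduct_sum_smul_vecMulVec_mulVec (s : Finset ι) (c : ι → R) (w : ι → n → R)
    (x : n → R) :
    x ⬝ᵥ (∑ l ∈ s, c l • vecMulVec (w l) (w l)) *ᵥ x = ∑ l ∈ s, c l * (w l ⬝ᵥ x) ^ 2 := by
  rw [sum_mulVec, dotProduct_sum]
  refine Finset.sum_congr rfl fun l _ => ?_
  rw [smul_mulVec, vecMulVec_mulVec, op_smul_eq_smul, dotProduct_smul, dotProduct_smul,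
    smul_eq_mul, smul_eq_mul, dotProduct_comm x, sq]

end CommSemiring

section Field

variable {𝕜 : Type*} [Field 𝕜] {n : Type*} [Fintype n] [DecidableEq n]

theorem det_add_vecMulVec {A : Matrix n n 𝕜} (hA : IsUnit A.det) (u v : n → 𝕜) :
    (A + vecMulVec u v).det = A.det * (1 + v ⬝ᵥ A⁻¹ *ᵥ u) := by
  rw [vecMulVec_eq Unit, det_add_replicateCol_mul_replicateRow hA, det_unique (n := Unit),
    ← replicateRow_vecMul, add_apply, one_apply_eq, replicateRow_mul_replicateCol_apply,
    dotProduct_mulVec]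

theorem inv_one_add_mul_dotProduct_nonsing_inv_mulVec {A : Matrix n n 𝕜} (c : 𝕜) (v : n → 𝕜)
    (hA : IsUnit A.det) (hB : IsUnit (A + c • vecMulVec v v).det) :
    (1 + c * (v ⬝ᵥ A⁻¹ *ᵥ v))⁻¹ = 1 - c * (v ⬝ᵥ (A + c • vecMulVec v v)⁻¹ *ᵥ v) := by
  -- by the matrix determinant lemma, both sides equal `det A / det (A + c v vᵀ)`
  have hAB : (A + c • vecMulVec v v).det = A.det * (1 + c * (v ⬝ᵥ A⁻¹ *ᵥ v)) := by
    rw [← smul_vecMulVec, det_add_vecMulVec hA, mulVec_smul, dotProduct_smul, smul_eq_mul]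
  set B := A + c • vecMulVec v v
  have hBA : A.det = B.det * (1 - c * (v ⬝ᵥ B⁻¹ *ᵥ v)) := by
    have hA' : A = B + (-c) • vecMulVec v v := by simp [B]
    conv_lhs => rw [hA']
    rw [← smul_vecMulVec, det_add_vecMulVec hB, mulVec_smul, dotProduct_smul, smul_eq_mul,
      neg_mul, ← sub_eq_add_neg]
  refine inv_eq_of_mul_eq_one_left (mul_left_cancel₀ hA.ne_zero ?_)
  linear_combination -hBA - (1 - c * (v ⬝ᵥ B⁻¹ *ᵥ v)) * hAB

theorem sum_inv_one_add_mul_dotProduct_erase_inv_mulVec {ι : Type*} [Fintype ι] [DecidableEq ι]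
    (c : ι → 𝕜) (w : ι → n → 𝕜) (hB : IsUnit (∑ l, c l • vecMulVec (w l) (w l)).det)
    (hBk : ∀ k, IsUnit (∑ l ∈ Finset.univ.erase k, c l • vecMulVec (w l) (w l)).det) :
    ∑ k, (1 + c k * (w k ⬝ᵥ (∑ l ∈ Finset.univ.erase k,
        c l • vecMulVec (w l) (w l))⁻¹ *ᵥ w k))⁻¹
      = Fintype.card ι - Fintype.card n := by
  set B := ∑ l, c l • vecMulVec (w l) (w l)
  have hsplit (k : ι) : (∑ l ∈ Finset.univ.erase k, c l • vecMulVec (w l) (w l))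
      + c k • vecMulVec (w k) (w k) = B :=
    Finset.sum_erase_add _ _ (Finset.mem_univ k)
  have htrace : ∑ k, c k * (w k ⬝ᵥ B⁻¹ *ᵥ w k) = Fintype.card n :=
    calc _ = trace (B⁻¹ * ∑ k, c k • vecMulVec (w k) (w k)) := by
          simp_rw [Matrix.mul_sum, trace_sum, Matrix.mul_smul, trace_smul, smul_eq_mul,
            dotProduct_mulVec_eq_trace_mul_vecMulVec]
      _ = Fintype.card n := by rw [nonsing_inv_mul _ hB, trace_one]
  calc _ = ∑ k, (1 - c k * (w k ⬝ᵥ B⁻¹ *ᵥ w k)) := by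
        refine Finset.sum_congr rfl fun k _ => ?_
        rw [inv_one_add_mul_dotProduct_nonsing_inv_mulVec _ _ (hBk k) (by rwa [hsplit]), hsplit]
    _ = _ := by
        rw [Finset.sum_sub_distrib, htrace, Finset.sum_const, Finset.card_univ, nsmul_one]

end Field

section Real

variable {n ι : Type*} [Fintype n]

theorem posSemidef_sum_smul_vecMulVec (s : Finset ι) {c : ι → ℝ} (hc : ∀ l ∈ s, 0 ≤ c l)
    (w : ι → n → ℝ) : (∑ l ∈ s, c l • vecMulVec (w l) (w l)).PosSemidef :=
  posSemidef_sum s fun l hl => by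
    simpa using (posSemidef_vecMulVec_self_star (w l)).smul (hc l hl)

theorem posDef_sum_smul_vecMulVec (s : Finset ι) {c : ι → ℝ} (hc : ∀ l ∈ s, 0 < c l)
    {w : ι → n → ℝ} (hw : Submodule.span ℝ (w '' s) = ⊤) :
    (∑ l ∈ s, c l • vecMulVec (w l) (w l)).PosDef := by
  refine PosDef.of_dotProduct_mulVec_pos
    (posSemidef_sum_smul_vecMulVec s (fun l hl => (hc l hl).le) w).isHermitian fun x hx => ?_
  rw [star_trivial, dotProduct_sum_smul_vecMulVec_mulVec]
  obtain ⟨l, hl, hlx⟩ : ∃ l ∈ s, w l ⬝ᵥ x ≠ 0 := by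
    by_contra! h
    have hperp (y) (hy : y ∈ Submodule.span ℝ (w '' s)) : y ⬝ᵥ x = 0 := by
      induction hy using Submodule.span_induction with
      | mem _ hy => obtain ⟨l, hl, rfl⟩ := hy; exact h l hl
      | zero => exact zero_dotProduct x
      | add _ _ _ _ h₁ h₂ => rw [add_dotProduct, h₁, h₂, add_zero]
      | smul a _ _ h => rw [smul_dotProduct, h, smul_zero]
    exact hx (dotProduct_self_eq_zero.mp (hperp x (hw ▸ Submodule.mem_top)))
  exact Finset.sum_pos' (fun l hl => mul_nonneg (hc l hl).le (sq_nonneg _))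
    ⟨l, hl, mul_pos (hc l hl) (by positivity)⟩

variable [DecidableEq n]

theorem sum_inv_one_add_mul_dotProduct_erase_inv_mulVec_of_posDef [Fintype ι] [DecidableEq ι]
    [Nonempty ι] {c : ι → ℝ} (hc : ∀ l, 0 ≤ c l) (w : ι → n → ℝ)
    (hBk : ∀ k, (∑ l ∈ Finset.univ.erase k, c l • vecMulVec (w l) (w l)).PosDef) :
    ∑ k, (1 + c k * (w k ⬝ᵥ (∑ l ∈ Finset.univ.erase k,
        c l • vecMulVec (w l) (w l))⁻¹ *ᵥ w k))⁻¹
      = Fintype.card ι - Fintype.card n := by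
  obtain ⟨k⟩ := ‹Nonempty ι›
  have hB : (∑ l, c l • vecMulVec (w l) (w l)).PosDef := by
    rw [← Finset.sum_erase_add _ _ (Finset.mem_univ k)]
    exact (hBk k).add_posSemidef
      (by simpa using posSemidef_sum_smul_vecMulVec {k} (fun l _ => hc l) w)
  exact sum_inv_one_add_mul_dotProduct_erase_inv_mulVec c w hB.det_pos.ne'.isUnit
    fun k => (hBk k).det_pos.ne'.isUnit

theorem PosDef.norm_inv_one_add_mul_dotProduct_inv_mulVec_le_one {A : Matrix n n ℝ}
    (hA : A.PosDef) {c : ℝ} (hc : 0 ≤ c) (v : n → ℝ) :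
    ‖(1 + c * (v ⬝ᵥ A⁻¹ *ᵥ v))⁻¹‖ ≤ 1 := by
  have hq : 0 ≤ v ⬝ᵥ A⁻¹ *ᵥ v := by simpa using hA.inv.posSemidef.dotProduct_mulVec_nonneg v
  rw [Real.norm_of_nonneg (by positivity)]
  exact inv_le_one_of_one_le₀ (le_add_of_nonneg_right (mul_nonneg hc hq))

theorem measurable_dotProduct_inv_mulVec {α : Type*} [TopologicalSpace α] [MeasurableSpace α]
    [OpensMeasurableSpace α] {A : α → Matrix n n ℝ} (hA : Continuous A) {v : α → n → ℝ}
    (hv : Continuous v) : Measurable fun x => v x ⬝ᵥ (A x)⁻¹ *ᵥ v x := by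
  -- inversion is discontinuous, but `A⁻¹ = (det A)⁻¹ • adjugate A` is measurable
  have hinv (a b : n) : Measurable fun x => (A x)⁻¹ a b := by
    simp only [inv_def, Ring.inverse_eq_inv', Matrix.smul_apply, smul_eq_mul]
    exact hA.matrix_det.measurable.inv.mul (hA.matrix_adjugate.matrix_elem a b).measurable
  have hv' (a : n) : Measurable fun x => v x a := (continuous_apply a |>.comp hv).measurable
  simp only [dotProduct, mulVec]
  exact Finset.measurable_sum _ fun a _ => (hv' a).mul
    (Finset.measurable_sum _ fun b _ => (hinv a b).mul (hv' b))

end Real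

end Matrix

theorem MeasureTheory.Measure.AbsolutelyContinuous.pi_fin {α : Type*} [MeasurableSpace α]
    {μ ν : Measure α} [SigmaFinite μ] [SigmaFinite ν] (h : μ ≪ ν) (d : ℕ) :
    Measure.pi (fun _ : Fin d => μ) ≪ Measure.pi (fun _ : Fin d => ν) := by
  induction d with
  | zero => rw [Measure.pi_of_empty, Measure.pi_of_empty]
  | succ d ih =>
    rw [← (MeasurePreserving.symm _ (measurePreserving_piFinSuccAbove (fun _ => μ) 0)).map_eq,
      ← (MeasurePreserving.symm _ (measurePreserving_piFinSuccAbove (fun _ => ν) 0)).map_eq]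
    exact (h.prod ih).map (MeasurableEquiv.measurable _)

section SubspaceNull

variable {E : Type*} [NormedAddCommGroup E] [NormedSpace ℝ E] [FiniteDimensional ℝ E]
  [MeasurableSpace E] {ν : Measure E}

theorem ae_linearIndependent [BorelSpace E] [SigmaFinite ν]
    (hν : ∀ p : Submodule ℝ E, p ≠ ⊤ → ν p = 0) {m : ℕ} (hm : m ≤ Module.finrank ℝ E) :
    ∀ᵐ w ∂(Measure.pi fun _ : Fin m => ν), LinearIndependent ℝ w := by
  induction m with
  | zero => exact Eventually.of_forall fun w => linearIndependent_empty_type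
  | succ m ih =>
    have hmeas : MeasurableSet
        {z : E × (Fin m → E) | LinearIndependent ℝ (Fin.cons z.1 z.2 : Fin (m + 1) → E)} :=
      (isOpen_setOfPred_linearIndependent.preimage (by fun_prop)).measurableSet
    have hcons : ∀ᵐ z ∂ν.prod (Measure.pi fun _ : Fin m => ν),
        LinearIndependent ℝ (Fin.cons z.1 z.2 : Fin (m + 1) → E) := by
      rw [Measure.ae_prod_iff_ae_ae hmeas, Measure.ae_ae_comm hmeas]
      filter_upwards [ih (by omega)] with w hw
      have hspan : Submodule.span ℝ (Set.range w) ≠ ⊤ := fun h => by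
        have := finrank_span_eq_card hw
        rw [h, finrank_top, Fintype.card_fin] at this
        omega
      filter_upwards [measure_eq_zero_iff_ae_notMem.mp (hν _ hspan)] with v hv
      exact linearIndependent_finCons.mpr ⟨hw, hv⟩
    filter_upwards [(measurePreserving_piFinSuccAbove (fun _ => ν) 0).quasiMeasurePreserving.ae
      hcons] with w hw
    simpa using hw

theorem ae_span_eq_top [BorelSpace E] [IsProbabilityMeasure ν]
    (hν : ∀ p : Submodule ℝ E, p ≠ ⊤ → ν p = 0) {m : ℕ} (hm : Module.finrank ℝ E ≤ m) :
    ∀ᵐ w ∂(Measure.pi fun _ : Fin m => ν), Submodule.span ℝ (Set.range w) = ⊤ := by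
  induction m, hm using Nat.le_induction with
  | base =>
    filter_upwards [ae_linearIndependent hν le_rfl] with w hw
    exact hw.span_eq_top_of_card_eq_finrank' (Fintype.card_fin _)
  | succ m _ ih =>
    have htail : ∀ᵐ z ∂ν.prod (Measure.pi fun _ : Fin m => ν),
        Submodule.span ℝ (Set.range z.2) = ⊤ :=
      measurePreserving_snd.quasiMeasurePreserving.ae ih
    filter_upwards [(measurePreserving_piFinSuccAbove (fun _ => ν) 0).quasiMeasurePreserving.ae
      htail] with w hw
    exact eq_top_iff.mpr (hw.ge.trans (Submodule.span_mono (Set.range_comp_subset_range _ w)))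

theorem ae_span_image_compl_singleton_eq_top [BorelSpace E] [IsProbabilityMeasure ν]
    (hν : ∀ p : Submodule ℝ E, p ≠ ⊤ → ν p = 0) {m : ℕ} (hm : Module.finrank ℝ E ≤ m) :
    ∀ᵐ w ∂(Measure.pi fun _ : Fin (m + 1) => ν), ∀ k, Submodule.span ℝ (w '' {k}ᶜ) = ⊤ := by
  refine ae_all_iff.mpr fun k => ?_
  have hrest : ∀ᵐ z ∂ν.prod (Measure.pi fun _ : Fin m => ν),
      Submodule.span ℝ (Set.range z.2) = ⊤ :=
    measurePreserving_snd.quasiMeasurePreserving.ae (ae_span_eq_top hν hm)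
  filter_upwards [(measurePreserving_piFinSuccAbove (fun _ => ν) k).quasiMeasurePreserving.ae
    hrest] with w hw
  rwa [← Fin.range_succAbove k, ← Set.range_comp]

end SubspaceNull

instance isProbabilityMeasure_gaussianPi (d : ℕ) : IsProbabilityMeasure (gaussianPi d) := by
  unfold gaussianPi
  infer_instance

theorem gaussianPi_absolutelyContinuous (d : ℕ) : gaussianPi d ≪ volume := by
  rw [volume_pi]
  exact (gaussianReal_absolutelyContinuous 0 one_ne_zero).pi_fin d

theorem gaussianPi_submodule_eq_zero {d : ℕ} {p : Submodule ℝ (Fin d → ℝ)} (hp : p ≠ ⊤) :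
    gaussianPi d p = 0 :=
  gaussianPi_absolutelyContinuous d (Measure.addHaar_submodule volume p hp)

theorem IsOrderedEigenvalues.pos {n : ℕ} {A : Matrix (Fin n) (Fin n) ℝ} {lam : Fin n → ℝ}
    (h : IsOrderedEigenvalues (A * Aᵀ) lam) (hA : IsUnit A.det) (k : Fin n) : 0 < lam k := by
  obtain ⟨-, hM, σ, rfl⟩ := h
  have hpd : (A * Aᵀ).PosDef := by
    simpa [conjTranspose_eq_transpose_of_trivial] using PosDef.mul_conjTranspose_self A
      (vecMul_injective_iff_isUnit.mpr ((isUnit_iff_isUnit_det A).mpr hA))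
  exact hpd.eigenvalues_pos (σ k)

noncomputable def tvalIntegrand {n i : ℕ} (lam : Fin n → ℝ) (k : Fin n) (w : Fin n → Fin i → ℝ) :
    ℝ :=
  (1 + lam k * (w k ⬝ᵥ (∑ l ∈ Finset.univ.erase k,
    lam l • vecMulVec (w l) (w l))⁻¹ *ᵥ w k))⁻¹

theorem measurable_tvalIntegrand {n i : ℕ} (lam : Fin n → ℝ) (k : Fin n) :
    Measurable (tvalIntegrand (i := i) lam k) :=
  (measurable_const.add (measurable_const.mul (measurable_dotProduct_inv_mulVec
    (continuous_finsetSum _ fun l _ => ((continuous_apply l).matrix_vecMulVec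
      (continuous_apply l)).const_smul (lam l)) (continuous_apply k)))).inv

theorem tval_sum_general {n : ℕ} (A : Matrix (Fin n) (Fin n) ℝ) (hfull : IsUnit A.det)
    (lam : Fin n → ℝ) (hlam : IsOrderedEigenvalues (A * Aᵀ) lam)
    (i : ℕ) (hi2 : i ≤ n - 1) :
    ∑ k, tval i lam k = (n : ℝ) - (i : ℝ) := by
  have hpos := hlam.pos hfull
  rcases n with _ | m
  · obtain rfl : i = 0 := by omega
    simp
  set μ := Measure.pi fun _ : Fin (m + 1) => gaussianPi i
  have hgood : ∀ᵐ w ∂μ, ∀ k,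
      (∑ l ∈ Finset.univ.erase k, lam l • vecMulVec (w l) (w l)).PosDef := by
    filter_upwards [ae_span_image_compl_singleton_eq_top (fun _ => gaussianPi_submodule_eq_zero)
      (by simpa using hi2 : Module.finrank ℝ (Fin i → ℝ) ≤ m)] with w hw k
    exact posDef_sum_smul_vecMulVec _ (fun l _ => hpos l)
      (by simpa [Set.compl_eq_univ_sdiff] using hw k)
  have hint (k : Fin (m + 1)) : Integrable (tvalIntegrand lam k) μ :=
    .of_bound (measurable_tvalIntegrand lam k).aestronglyMeasurable 1 <| hgood.mono fun w hw =>
      (hw k).norm_inv_one_add_mul_dotProduct_inv_mulVec_le_one (hpos k).le (w k)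
  calc ∑ k, tval i lam k = ∫ w, ∑ k, tvalIntegrand lam k w ∂μ :=
        (integral_finsetSum _ fun k _ => hint k).symm
    _ = ∫ _, ((m + 1 : ℕ) - i : ℝ) ∂μ := integral_congr_ae <| hgood.mono fun w hw =>
        (sum_inv_one_add_mul_dotProduct_erase_inv_mulVec_of_posDef
          (fun l => (hpos l).le) w hw).trans (by simp)
    _ = _ := by simp

/-- For any full-rank `n × n` matrix `A` and any `1 ≤ i ≤ n−1`, the quantities
`t_{i,k}(A)` (built from the ordered eigenvalues of `AAᵀ`) satisfy
`t_{i,1}(A) + ⋯ + t_{i,n}(A) = n − i`. -/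
theorem tval_sum {n : ℕ} (A : Matrix (Fin n) (Fin n) ℝ) (hfull : IsUnit A.det)
    (lam : Fin n → ℝ) (hlam : IsOrderedEigenvalues (A * Aᵀ) lam)
    (i : ℕ) (hi1 : 1 ≤ i) (hi2 : i ≤ n - 1) :
    ∑ k, tval i lam k = (n : ℝ) - (i : ℝ) :=
  tval_sum_general A hfull lam hlam i hi2
end

section
/- If A = I_n is the n×n identity matrix, then for all 1 ≤ i ≤ n−1 and 1 ≤ k ≤ n one has t_{i,k}(I_n) = (n − i)/n. -/
open MeasureTheory ProbabilityTheory Matrix Filter Topology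

/-! With all eigenvalues equal to one, put `W = ∑ₗ wₗ wₗᵀ` and `Sₖ = W - wₖ wₖᵀ`. The
Sherman–Morrison formula gives `1 / (1 + wₖᵀ Sₖ⁻¹ wₖ) = 1 - wₖᵀ W⁻¹ wₖ`, one minus the leverage
of `wₖ`. The `n` leverages sum to `tr (W⁻¹ W) = i`, and since the `wₗ` are i.i.d. they all have
the same expectation, namely `i / n`.

The inverses exist almost surely: for `|s| ≥ i` the determinant of `∑_{l ∈ s} wₗ wₗᵀ` is a
nonzero polynomial in the Gaussian entries, and a nonzero polynomial vanishes only on a null set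
of any product of measures without atoms. -/

theorem MeasurableEquiv.piCongrLeft_const_apply {ι ι' X : Type*} [MeasurableSpace X]
    (e : ι' ≃ ι) (x : ι' → X) : piCongrLeft (fun _ => X) e x = x ∘ e.symm :=
  funext fun a => by simpa using piCongrLeft_apply_apply e (β := fun _ => X) x (e.symm a)

namespace MvPolynomial

theorem ae_eval_ne_zero_pi_fin {m : ℕ} (μ : Fin m → Measure ℝ) [∀ j, SigmaFinite (μ j)]
    [∀ j, NullSingletonClass (μ j)] {p : MvPolynomial (Fin m) ℝ} (hp : p ≠ 0) :
    ∀ᵐ x ∂Measure.pi μ, eval x p ≠ 0 := by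
  induction m with
  | zero =>
    refine Filter.Eventually.of_forall fun x => ?_
    rw [eq_C_of_isEmpty p, eval_C]
    exact fun h => hp (by rw [eq_C_of_isEmpty p, h, C_0])
  | succ m ih =>
    set q := finSuccEquiv ℝ m p
    obtain ⟨d, hd⟩ : ∃ d, q.coeff d ≠ 0 := by
      by_contra! h
      exact hp ((finSuccEquiv ℝ m).injective (Polynomial.ext h |>.trans (map_zero _).symm))
    have hset : MeasurableSet {z : ℝ × (Fin m → ℝ) |
        eval ((MeasurableEquiv.piFinSuccAbove (fun _ => ℝ) 0).symm z) p ≠ 0} :=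
      ((continuous_eval p).measurable.comp (MeasurableEquiv.measurable _)
        (measurableSet_singleton 0)).compl
    rw [← (measurePreserving_piFinSuccAbove μ 0).symm.map_eq,
      (MeasurableEquiv.measurableEmbedding _).ae_map_iff, Measure.ae_prod_iff_ae_ae hset,
      Measure.ae_ae_comm hset]
    -- For almost every tail `s`, the coefficient `q.coeff d` survives at `s`, so `p (·, s)` is a
    -- nonzero polynomial in one variable and has only finitely many roots.
    filter_upwards [ih (fun j => μ j.succ) hd] with s hs
    have hQ : Polynomial.map (eval s) q ≠ 0 := fun h => hs <| by
      simpa using congrArg (Polynomial.coeff · d) h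
    filter_upwards [(Polynomial.finite_setOfPred_isRoot hQ).countable.ae_notMem (μ 0)] with a ha
    simp only [MeasurableEquiv.piFinSuccAbove_symm_apply, Fin.insertNthEquiv_zero]
    show eval (Fin.cons a s) p ≠ 0
    rwa [eval_eq_eval_mv_eval']

theorem ae_eval_ne_zero_pi {ι : Type*} [Fintype ι] (μ : ι → Measure ℝ) [∀ j, SigmaFinite (μ j)]
    [∀ j, NullSingletonClass (μ j)] {p : MvPolynomial ι ℝ} (hp : p ≠ 0) :
    ∀ᵐ x ∂Measure.pi μ, eval x p ≠ 0 := by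
  let e := Fintype.equivFin ι
  rw [← (measurePreserving_piCongrLeft μ e.symm).map_eq,
    (MeasurableEquiv.measurableEmbedding _).ae_map_iff]
  filter_upwards [ae_eval_ne_zero_pi_fin (fun j => μ (e.symm j))
    ((rename_injective e e.injective).ne hp |>.trans_eq (map_zero _))] with y hy
  rwa [MeasurableEquiv.piCongrLeft_const_apply, Equiv.symm_symm, ← eval_rename]

theorem ae_eval_uncurry_ne_zero {ι κ : Type*} [Fintype ι] [Fintype κ] (μ : ι → κ → Measure ℝ)
    [∀ a b, IsProbabilityMeasure (μ a b)] [∀ a b, NullSingletonClass (μ a b)]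
    {p : MvPolynomial (ι × κ) ℝ} (hp : p ≠ 0) :
    ∀ᵐ w ∂Measure.pi (fun a => Measure.pi (μ a)), eval (Function.uncurry w) p ≠ 0 := by
  have h := Measure.infinitePi_map_curry μ
  simp only [Measure.infinitePi_eq_pi] at h
  rw [← h, (MeasurableEquiv.measurableEmbedding _).ae_map_iff]
  simpa [MeasurableEquiv.coe_curry] using ae_eval_ne_zero_pi (fun q : ι × κ => μ q.1 q.2) hp

end MvPolynomial

namespace Matrix

variable {ι κ : Type*} [Fintype κ] [DecidableEq κ]

theorem exists_sum_vecMulVec_eq_one {R : Type*} [Semiring R] {s : Finset ι}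
    (hs : Fintype.card κ ≤ s.card) : ∃ w : ι → κ → R, ∑ l ∈ s, vecMulVec (w l) (w l) = 1 := by
  classical
  obtain ⟨f⟩ : Nonempty (κ ↪ s) := Function.Embedding.nonempty_of_card_le (by simpa using hs)
  have hf : ∀ a b, (f a : ι) = f b ↔ a = b := fun a b =>
    Subtype.val_injective.eq_iff.trans f.injective.eq_iff
  refine ⟨fun l b => if (f b : ι) = l then 1 else 0, ?_⟩
  ext a b
  simp [vecMulVec_apply, Matrix.sum_apply, one_apply, hf]

theorem ae_posDef_sum_vecMulVec [Fintype ι] (μ : ι → κ → Measure ℝ)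
    [∀ a b, IsProbabilityMeasure (μ a b)] [∀ a b, NullSingletonClass (μ a b)] {s : Finset ι}
    (hs : Fintype.card κ ≤ s.card) :
    ∀ᵐ w ∂Measure.pi (fun a => Measure.pi (μ a)), (∑ l ∈ s, vecMulVec (w l) (w l)).PosDef := by
  let P : MvPolynomial (ι × κ) ℝ :=
    (Matrix.of fun a b => ∑ l ∈ s, MvPolynomial.X (l, a) * MvPolynomial.X (l, b)).det
  have hP : ∀ w : ι → κ → ℝ,
      MvPolynomial.eval (Function.uncurry w) P = (∑ l ∈ s, vecMulVec (w l) (w l)).det := by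
    intro w
    rw [RingHom.map_det]
    congr 1
    ext a b
    simp [vecMulVec_apply, Matrix.sum_apply]
  obtain ⟨w₀, hw₀⟩ := exists_sum_vecMulVec_eq_one (R := ℝ) hs
  have hP0 : P ≠ 0 := fun h => by simpa [h, hw₀] using hP w₀
  filter_upwards [MvPolynomial.ae_eval_uncurry_ne_zero μ hP0] with w hw
  refine (posSemidef_sum s fun l _ => ?_).posDef_iff_det_ne_zero.mpr (hP w ▸ hw)
  simpa using posSemidef_vecMulVec_self_star (w l)

theorem mulVec_inv_add_vecMulVec {R : Type*} [CommRing R] {S : Matrix κ κ R} {u v : κ → R}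
    (hS : IsUnit S.det) (hSuv : IsUnit (S + vecMulVec u v).det) :
    (1 + v ⬝ᵥ S⁻¹ *ᵥ u) • (S + vecMulVec u v)⁻¹ *ᵥ u = S⁻¹ *ᵥ u := by
  have h : (S + vecMulVec u v) *ᵥ S⁻¹ *ᵥ u = (1 + v ⬝ᵥ S⁻¹ *ᵥ u) • u := by
    rw [add_mulVec, mulVec_mulVec, mul_nonsing_inv _ hS, one_mulVec, vecMulVec_mulVec,
      op_smul_eq_smul, add_smul, one_smul]
  rw [← mulVec_smul, ← h, mulVec_mulVec, nonsing_inv_mul _ hSuv, one_mulVec]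

theorem PosDef.inv_one_add_dotProduct_inv_mulVec {S : Matrix κ κ ℝ} (hS : S.PosDef)
    (v : κ → ℝ) : (1 + v ⬝ᵥ S⁻¹ *ᵥ v)⁻¹ = 1 - v ⬝ᵥ (S + vecMulVec v v)⁻¹ *ᵥ v := by
  have hq : 0 ≤ v ⬝ᵥ S⁻¹ *ᵥ v := by simpa using hS.inv.posSemidef.dotProduct_mulVec_nonneg v
  have hSv : (S + vecMulVec v v).PosDef :=
    hS.add_posSemidef (by simpa using posSemidef_vecMulVec_self_star v)
  have h := congrArg (v ⬝ᵥ ·) (mulVec_inv_add_vecMulVec (isUnit_iff_ne_zero.mpr hS.det_pos.ne')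
    (isUnit_iff_ne_zero.mpr hSv.det_pos.ne'))
  simp only [dotProduct_smul, smul_eq_mul] at h
  field_simp
  linarith

end Matrix

section Leverage

variable {ι κ : Type*} [Fintype ι]

def scatterMatrix (w : ι → κ → ℝ) : Matrix κ κ ℝ := ∑ l, vecMulVec (w l) (w l)

theorem continuous_scatterMatrix : Continuous (scatterMatrix : (ι → κ → ℝ) → Matrix κ κ ℝ) := by
  unfold scatterMatrix
  fun_prop

theorem scatterMatrix_comp_perm (w : ι → κ → ℝ) (σ : Equiv.Perm ι) :
    scatterMatrix (w ∘ σ) = scatterMatrix w :=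
  Equiv.sum_comp σ fun l => vecMulVec (w l) (w l)

theorem scatterMatrix_eq_sum_erase_add [DecidableEq ι] (w : ι → κ → ℝ) (k : ι) :
    scatterMatrix w = ∑ l ∈ Finset.univ.erase k, vecMulVec (w l) (w l) + vecMulVec (w k) (w k) :=
  (Finset.sum_erase_add _ _ (Finset.mem_univ k)).symm

variable [Fintype κ]

theorem posSemidef_scatterMatrix (w : ι → κ → ℝ) : (scatterMatrix w).PosSemidef :=
  posSemidef_sum _ fun l _ => by simpa using posSemidef_vecMulVec_self_star (w l)

variable [DecidableEq κ]

noncomputable def leverage (w : ι → κ → ℝ) (k : ι) : ℝ := w k ⬝ᵥ (scatterMatrix w)⁻¹ *ᵥ w k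

theorem leverage_nonneg (w : ι → κ → ℝ) (k : ι) : 0 ≤ leverage w k := by
  simpa [leverage] using (posSemidef_scatterMatrix w).inv.dotProduct_mulVec_nonneg (w k)

theorem leverage_comp_perm (w : ι → κ → ℝ) (σ : Equiv.Perm ι) (k : ι) :
    leverage (w ∘ σ) k = leverage w (σ k) := by
  rw [leverage, leverage, scatterMatrix_comp_perm, Function.comp_apply]

theorem sum_leverage {w : ι → κ → ℝ} (hw : IsUnit (scatterMatrix w).det) :
    ∑ k, leverage w k = Fintype.card κ := by
  have h : ∀ k, leverage w k = trace ((scatterMatrix w)⁻¹ * vecMulVec (w k) (w k)) := fun k => by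
    rw [mul_vecMulVec, trace_vecMulVec, dotProduct_comm, leverage]
  simp_rw [h, ← trace_sum, ← Finset.mul_sum]
  rw [← scatterMatrix, nonsing_inv_mul _ hw, trace_one]

theorem leverage_le_card {w : ι → κ → ℝ} (hw : IsUnit (scatterMatrix w).det) (k : ι) :
    leverage w k ≤ Fintype.card κ :=
  sum_leverage hw ▸ Finset.single_le_sum (fun j _ => leverage_nonneg w j) (Finset.mem_univ k)

theorem one_sub_leverage [DecidableEq ι] {w : ι → κ → ℝ} {k : ι}
    (hS : (∑ l ∈ Finset.univ.erase k, vecMulVec (w l) (w l)).PosDef) :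
    1 - leverage w k =
      (1 + w k ⬝ᵥ (∑ l ∈ Finset.univ.erase k, vecMulVec (w l) (w l))⁻¹ *ᵥ w k)⁻¹ := by
  rw [leverage, scatterMatrix_eq_sum_erase_add w k, hS.inv_one_add_dotProduct_inv_mulVec]

theorem leverage_eq_inv_det_mul (w : ι → κ → ℝ) (k : ι) :
    leverage w k = (scatterMatrix w).det⁻¹ * (w k ⬝ᵥ (scatterMatrix w).adjugate *ᵥ w k) := by
  rw [leverage, inv_def, Ring.inverse_eq_inv', smul_mulVec, dotProduct_smul, smul_eq_mul]

theorem measurable_leverage (k : ι) : Measurable fun w : ι → κ → ℝ => leverage w k := by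
  simp_rw [leverage_eq_inv_det_mul]
  have h := continuous_scatterMatrix (ι := ι) (κ := κ)
  exact h.matrix_det.measurable.inv.mul ((continuous_apply k).dotProduct
    (h.matrix_adjugate.matrix_mulVec (continuous_apply k))).measurable

variable (ν : Measure (κ → ℝ)) [IsProbabilityMeasure ν]

theorem integrable_leverage
    (hν : ∀ᵐ w ∂Measure.pi fun _ : ι => ν, IsUnit (scatterMatrix w).det) (k : ι) :
    Integrable (fun w => leverage w k) (Measure.pi fun _ : ι => ν) :=
  (integrable_const (Fintype.card κ : ℝ)).mono' (measurable_leverage k).aestronglyMeasurable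
    (hν.mono fun w hw => by
      rw [Real.norm_of_nonneg (leverage_nonneg w k)]
      exact leverage_le_card hw k)

theorem integral_leverage
    (hν : ∀ᵐ w ∂Measure.pi fun _ : ι => ν, IsUnit (scatterMatrix w).det) (k : ι) :
    ∫ w, leverage w k ∂Measure.pi (fun _ : ι => ν) = Fintype.card κ / Fintype.card ι := by
  classical
  have hexch : ∀ k', ∫ w, leverage w k' ∂Measure.pi (fun _ : ι => ν) =
      ∫ w, leverage w k ∂Measure.pi fun _ : ι => ν := fun k' => by
    rw [← (measurePreserving_piCongrLeft (fun _ : ι => ν) (Equiv.swap k k')).integral_comp']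
    simp [MeasurableEquiv.piCongrLeft_const_apply, leverage_comp_perm]
  have hsum : ∑ k', ∫ w, leverage w k' ∂Measure.pi (fun _ : ι => ν) = Fintype.card κ := by
    rw [← integral_finsetSum _ fun k' _ => integrable_leverage ν hν k',
      integral_congr_ae (hν.mono fun w hw => sum_leverage hw)]
    simp
  simp only [hexch, Finset.sum_const, Finset.card_univ, nsmul_eq_mul] at hsum
  have : (Fintype.card ι : ℝ) ≠ 0 := Nat.cast_ne_zero.mpr (Fintype.card_pos_iff.mpr ⟨k⟩).ne'
  rw [← hsum]
  field_simp

end Leverage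

instance (d : ℕ) : IsProbabilityMeasure (gaussianPi d) := by
  unfold gaussianPi
  infer_instance

theorem tval_identity_general {n : ℕ} (i : ℕ) (hi2 : i ≤ n - 1) (k : Fin n) :
    tval i (fun _ : Fin n => (1 : ℝ)) k = ((n : ℝ) - (i : ℝ)) / (n : ℝ) := by
  have : NullSingletonClass (gaussianReal 0 1) := nullSingletonClass_gaussianReal one_ne_zero
  have hS := ae_posDef_sum_vecMulVec (fun (_ : Fin n) (_ : Fin i) => gaussianReal 0 1)
    (s := Finset.univ.erase k) (by simpa using hi2)
  have hW : ∀ᵐ w ∂Measure.pi (fun _ : Fin n => gaussianPi i), IsUnit (scatterMatrix w).det :=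
    (ae_posDef_sum_vecMulVec (fun (_ : Fin n) (_ : Fin i) => gaussianReal 0 1)
      (s := Finset.univ) (by simp only [Finset.card_univ, Fintype.card_fin]; omega)).mono
      fun w hw => isUnit_iff_ne_zero.mpr hw.det_pos.ne'
  have hn : (n : ℝ) ≠ 0 := Nat.cast_ne_zero.mpr k.pos.ne'
  calc tval i (fun _ : Fin n => (1 : ℝ)) k
      = ∫ w, 1 - leverage w k ∂Measure.pi (fun _ : Fin n => gaussianPi i) :=
        integral_congr_ae (hS.mono fun w hw => by simpa using (one_sub_leverage hw).symm)
    _ = 1 - (i : ℝ) / n := by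
        rw [integral_sub (integrable_const 1) (integrable_leverage _ hW k),
          integral_leverage _ hW k]
        simp
    _ = ((n : ℝ) - (i : ℝ)) / (n : ℝ) := by field_simp

/-- If `A = I_n` (so that all eigenvalues of `AAᵀ` are equal to `1`), then
`t_{i,k}(I_n) = (n − i)/n` for all `1 ≤ i ≤ n−1` and `1 ≤ k ≤ n`. -/
theorem tval_identity {n : ℕ} (i : ℕ) (hi1 : 1 ≤ i) (hi2 : i ≤ n - 1) (k : Fin n) :
    tval i (fun _ : Fin n => (1 : ℝ)) k = ((n : ℝ) - (i : ℝ)) / (n : ℝ) :=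
  tval_identity_general i hi2 k
end
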